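/- Generic rank equals term rank: fix m, n and a pattern E ⊆ {1,…,m} × {1,…,n}. For w : E → ℝ let M(w) be the m×n matrix whose (i,j)-entry is w(i,j) for (i,j) ∈ E and 0 otherwise. Let t be the maximal cardinality of a subset of E no two of whose elements share a row or share a column (the maximal number of independent free entries). Then (a) rank M(w) ≤ t for every w, and (b) the set { w ∈ ℝ^E : rank M(w) < t } has Lebesgue measure zero. -/

import Mathlib

/-
Expanding a nonzero `rank A × rank A` minor of any matrix `A` by the Leibniz formula gives a
permutation all of whose entries are nonzero, i.e. `rank A` independent positions in the support
of `A`; for a structured matrix these are free entries, so `rank M(w) ≤ t`. Conversely, if `F` is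
an independent set of `t` free entries, the minor of `M(w)` on the rows and columns of `F` is a
polynomial in `w`; it is nonzero, since it equals `1` at the indicator of `F`. Off its zero set
`rank M(w) ≥ t`, and the zero set of a nonzero real polynomial is Lebesgue-null (Fubini, by
induction on the number of variables: away from a null set of the other variables the
leading coefficient in the first one does not vanish, leaving finitely many roots).
-/

open Matrix

/-- The structured `m × n` matrix with pattern `E` and free entries given by `w : E → ℝ`. -/
def structMat (m n : ℕ) (E : Finset (Fin m × Fin n)) (w : E → ℝ) :
    Matrix (Fin m) (Fin n) ℝ :=
  fun a b => if h : (a, b) ∈ E then w ⟨(a, b), h⟩ else 0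

open MeasureTheory

def IndepPositions {α β : Type*} (F : Finset (α × β)) : Prop :=
  ∀ p ∈ F, ∀ q ∈ F, p ≠ q → p.1 ≠ q.1 ∧ p.2 ≠ q.2

theorem indepPositions_image_univ {ι α β : Type*} [Fintype ι] [DecidableEq α] [DecidableEq β]
    {r : ι → α} {c : ι → β} (hr : r.Injective) (hc : c.Injective) :
    IndepPositions (Finset.univ.image fun i => (r i, c i)) := by
  simp only [IndepPositions, Finset.mem_image, Finset.mem_univ, true_and]
  rintro _ ⟨i, rfl⟩ _ ⟨j, rfl⟩ hij
  have hij : i ≠ j := fun h => hij (h ▸ rfl)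
  exact ⟨hr.ne hij, hc.ne hij⟩

theorem IndepPositions.mk_mem_iff {α β : Type*} {F : Finset (α × β)} (hF : IndepPositions F)
    {p q : α × β} (hp : p ∈ F) (hq : q ∈ F) : (p.1, q.2) ∈ F ↔ p = q := by
  refine ⟨fun h => ?_, by rintro rfl; exact hp⟩
  have hrow : (p.1, q.2) = p := by_contra fun hne => (hF _ h _ hp hne).1 rfl
  by_contra hne
  exact (hF _ hp _ hq hne).2 (by rw [← hrow])

namespace MvPolynomial

theorem volume_setOf_eval_eq_zero_fin :
    ∀ {k : ℕ} {p : MvPolynomial (Fin k) ℝ}, p ≠ 0 → volume {x | eval x p = 0} = 0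
  | 0, p, hp => by
    obtain ⟨c, rfl⟩ := C_surjective (Fin 0) p
    have hc : c ≠ 0 := by rintro rfl; exact hp C_0
    simp [hc]
  | k + 1, p, hp => by
    set q := finSuccEquiv ℝ k p
    have hlead : q.leadingCoeff ≠ 0 :=
      Polynomial.leadingCoeff_ne_zero.mpr ((EmbeddingLike.map_ne_zero_iff).mpr hp)
    let e := MeasurableEquiv.piFinSuccAbove (fun _ : Fin (k + 1) => ℝ) 0
    let S : Set (ℝ × (Fin k → ℝ)) := e.symm ⁻¹' {x | eval x p = 0}
    have hS : MeasurableSet S :=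
      e.symm.measurable (measurableSet_eq_fun (continuous_eval p).measurable measurable_const)
    have hsection : ∀ s : Fin k → ℝ, eval s q.leadingCoeff ≠ 0 →
        volume ((fun y => (y, s)) ⁻¹' S) = 0 := by
      intro s hs
      have hmap : q.map (eval s) ≠ 0 := fun h =>
        hs (by simpa using congrArg (·.coeff q.natDegree) h)
      refine Set.Finite.measure_zero ((Polynomial.finite_setOfPred_isRoot hmap).subset ?_) _
      intro y hy
      have hcons : e.symm (y, s) = Fin.cons y s := by
        simp [e, MeasurableEquiv.piFinSuccAbove, Fin.consEquiv]
      simpa [S, hcons, eval_eq_eval_mv_eval'] using hy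
    have hae : ∀ᵐ s : Fin k → ℝ, eval s q.leadingCoeff ≠ 0 :=
      ae_iff.mpr (by simpa using volume_setOf_eval_eq_zero_fin hlead)
    calc volume {x | eval x p = 0} = (volume.prod volume) S := by
          rw [← Measure.volume_eq_prod,
            ← (volume_preserving_piFinSuccAbove (fun _ => ℝ) 0).measure_preimage
              hS.nullMeasurableSet]
          exact congrArg volume (e.toEquiv.preimage_symm_preimage _).symm
      _ = ∫⁻ s, volume ((fun y => (y, s)) ⁻¹' S) := Measure.prod_apply_symm hS
      _ = 0 := (lintegral_congr_ae (hae.mono hsection)).trans lintegral_zero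

theorem volume_setOf_eval_eq_zero {ι : Type*} [Fintype ι] {p : MvPolynomial ι ℝ} (hp : p ≠ 0) :
    volume {x | eval x p = 0} = 0 := by
  let e : Fin (Fintype.card ι) ≃ ι := (Fintype.equivFin ι).symm
  have hrename : rename e.symm p ≠ 0 :=
    (map_ne_zero_iff _ (rename_injective _ e.symm.injective)).mpr hp
  rw [← (volume_measurePreserving_piCongrLeft (fun _ : ι => ℝ) e).measure_preimage
    (measurableSet_eq_fun (continuous_eval p).measurable measurable_const).nullMeasurableSet]
  convert volume_setOf_eval_eq_zero_fin hrename using 3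
  ext x
  have hx : MeasurableEquiv.piCongrLeft (fun _ => ℝ) e x = x ∘ e.symm := by
    ext i
    simpa using MeasurableEquiv.piCongrLeft_apply_apply (β := fun _ : ι => ℝ) e x (e.symm i)
  simp [hx, eval_rename]

end MvPolynomial

namespace Matrix

variable {K m n : Type*} [Field K] [Fintype n]

theorem exists_linearIndependent_cols (A : Matrix m n K) :
    ∃ c : Fin A.rank → n, LinearIndependent K (A.submatrix id c).col := by
  obtain ⟨κ, a, ha, hspan, hli⟩ := exists_linearIndependent' K A.col
  have : Fintype κ := Fintype.ofInjective a ha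
  have hcard : Fintype.card κ = A.rank := by
    rw [rank_eq_finrank_span_cols, ← hspan, finrank_span_eq_card hli]
  let e := Fintype.equivFinOfCardEq hcard
  exact ⟨a ∘ e.symm, hli.comp _ e.symm.injective⟩

theorem exists_det_submatrix_ne_zero [Fintype m] (A : Matrix m n K) :
    ∃ (r : Fin A.rank → m) (c : Fin A.rank → n), (A.submatrix r c).det ≠ 0 := by
  obtain ⟨c, hc⟩ := A.exists_linearIndependent_cols
  have hrank : (A.submatrix id c)ᵀ.rank = A.rank := by
    rw [LinearIndependent.rank_matrix hc, Fintype.card_fin]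
  obtain ⟨r, hr⟩ := (A.submatrix id c)ᵀ.exists_linearIndependent_cols
  refine ⟨r ∘ Fin.cast hrank.symm, c, ?_⟩
  have hrows : LinearIndependent K (A.submatrix (r ∘ Fin.cast hrank.symm) c).row :=
    hr.comp _ (Fin.cast_injective _)
  exact (isUnit_iff_isUnit_det _).mp (linearIndependent_rows_iff_isUnit.mp hrows) |>.ne_zero

theorem exists_indepPositions_card_eq_rank [Fintype m] (A : Matrix m n K) :
    ∃ F : Finset (m × n), IndepPositions F ∧ F.card = A.rank ∧ ∀ p ∈ F, A p.1 p.2 ≠ 0 := by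
  classical
  obtain ⟨r, c, hdet⟩ := A.exists_det_submatrix_ne_zero
  have hr : Function.Injective r := fun i j h => by
    by_contra hij
    exact hdet (det_zero_of_row_eq hij (by ext; simp [h]))
  have hc : Function.Injective c := fun i j h => by
    by_contra hij
    exact hdet (det_zero_of_column_eq hij (by simp [h]))
  rw [det_apply] at hdet
  obtain ⟨σ, -, hσ⟩ := Finset.exists_ne_zero_of_sum_ne_zero hdet
  have hentry : ∀ i, A (r (σ i)) (c i) ≠ 0 := fun i =>
    Finset.prod_ne_zero_iff.mp (right_ne_zero_of_smul hσ) i (Finset.mem_univ i)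
  refine ⟨Finset.univ.image fun i => (r (σ i), c i),
    indepPositions_image_univ (hr.comp σ.injective) hc, ?_, ?_⟩
  · rw [Finset.card_image_of_injective _ fun i j h => hc (congrArg Prod.snd h), Finset.card_fin]
  · simpa using hentry

end Matrix

open MvPolynomial

section StructMat

variable {m n : ℕ} {E : Finset (Fin m × Fin n)}

noncomputable def structMatPoly (m n : ℕ) (E : Finset (Fin m × Fin n)) :
    Matrix (Fin m) (Fin n) (MvPolynomial E ℝ) :=
  of fun a b => if h : (a, b) ∈ E then X ⟨(a, b), h⟩ else 0

theorem structMatPoly_map_eval (w : E → ℝ) :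
    (structMatPoly m n E).map (eval w) = structMat m n E w := by
  ext a b
  simp only [structMatPoly, structMat, map_apply, of_apply]
  split_ifs <;> simp

noncomputable def patternMinor (E F : Finset (Fin m × Fin n)) : MvPolynomial E ℝ :=
  ((structMatPoly m n E).submatrix (fun p : F => p.1.1) (fun p : F => p.1.2)).det

theorem eval_patternMinor (F : Finset (Fin m × Fin n)) (w : E → ℝ) :
    eval w (patternMinor E F) =
      ((structMat m n E w).submatrix (fun p : F => p.1.1) (fun p : F => p.1.2)).det := by
  rw [patternMinor, RingHom.map_det, ← structMatPoly_map_eval]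
  rfl

theorem submatrix_structMat_indicator {F : Finset (Fin m × Fin n)} (hF : IndepPositions F)
    (hFE : F ⊆ E) :
    (structMat m n E fun e => if e.1 ∈ F then 1 else 0).submatrix
      (fun p : F => p.1.1) (fun p : F => p.1.2) = 1 := by
  classical
  ext p q
  by_cases hpq : p = q
  · subst hpq
    simp [structMat, hFE p.2, p.2]
  · have hmem : (p.1.1, q.1.2) ∉ F := fun h => hpq (Subtype.ext ((hF.mk_mem_iff p.2 q.2).mp h))
    simp [structMat, hmem, one_apply_ne hpq]

theorem patternMinor_ne_zero {F : Finset (Fin m × Fin n)} (hF : IndepPositions F) (hFE : F ⊆ E) :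
    patternMinor E F ≠ 0 := by
  intro h
  have := eval_patternMinor F fun e : E => if e.1 ∈ F then 1 else 0
  rw [h, submatrix_structMat_indicator hF hFE, det_one, map_zero] at this
  exact zero_ne_one this

theorem card_le_rank_structMat_of_eval_ne_zero {F : Finset (Fin m × Fin n)} {w : E → ℝ}
    (h : eval w (patternMinor E F) ≠ 0) : F.card ≤ (structMat m n E w).rank := by
  rw [eval_patternMinor] at h
  calc F.card
        = ((structMat m n E w).submatrix (fun p : F => p.1.1) (fun p : F => p.1.2)).rank := by
        rw [rank_of_det_ne_zero h, Fintype.card_coe]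
    _ ≤ (structMat m n E w).rank := rank_submatrix_le _ _ _

end StructMat

/-- Generic rank equals term rank: if `t` is the maximal number of independent free entries of
the pattern `E` (no two sharing a row or a column), then `rank M(w) ≤ t` for every `w`, and
`rank M(w) < t` only on a Lebesgue-null set of parameter vectors `w`. -/
theorem stmt_7 (m n : ℕ) (E : Finset (Fin m × Fin n)) (t : ℕ)
    (ht : IsGreatest {k : ℕ | ∃ F : Finset (Fin m × Fin n), F ⊆ E ∧ F.card = k ∧
        ∀ p ∈ F, ∀ q ∈ F, p ≠ q → p.1 ≠ q.1 ∧ p.2 ≠ q.2} t) :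
    (∀ w : E → ℝ, (structMat m n E w).rank ≤ t) ∧
    MeasureTheory.volume {w : E → ℝ | (structMat m n E w).rank < t} = 0 := by
  refine ⟨fun w => ?_, ?_⟩
  · obtain ⟨F, hF, hcard, hentry⟩ := (structMat m n E w).exists_indepPositions_card_eq_rank
    refine hcard ▸ ht.2 ⟨F, fun p hp => ?_, rfl, hF⟩
    by_contra hpE
    exact hentry p hp (by simp [structMat, hpE])
  · obtain ⟨F, hFE, rfl, hF⟩ := ht.1
    refine measure_mono_null (fun w hw => ?_)
      (MvPolynomial.volume_setOf_eval_eq_zero (patternMinor_ne_zero hF hFE))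
    by_contra h
    exact (card_le_rank_structMat_of_eval_ne_zero h).not_gt hw
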